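/- As an identity of formal power series in z, the generating function of modular noncrossing (i.e., 2-noncrossing) diagrams satisfies ∑_{n≥0} Q_2(n) z^n = ((1 − z² + z⁴)/(1 − z − z² + z³ + 2z⁴ + z⁶)) · F_2((z⁴ − z⁶ + z⁸)/(1 − z − z² + z³ + 2z⁴ + z⁶)²). -/

import Mathlib

open scoped Classical

namespace ModularDiagrams

/-- A diagram over `n` vertices: a set of arcs `(i,j)` with `1 ≤ i < j ≤ n`,
pairwise vertex-disjoint (every vertex has degree at most one). -/
def IsDiagram (n : ℕ) (A : Finset (ℕ × ℕ)) : Prop :=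
  (∀ a ∈ A, 1 ≤ a.1 ∧ a.1 < a.2 ∧ a.2 ≤ n) ∧
  (∀ a ∈ A, ∀ b ∈ A, a ≠ b →
    a.1 ≠ b.1 ∧ a.1 ≠ b.2 ∧ a.2 ≠ b.1 ∧ a.2 ≠ b.2)

/-- `A` contains a `k`-crossing: `k` distinct arcs
`(i₁,j₁),…,(i_k,j_k)` with `i₁<⋯<i_k<j₁<⋯<j_k`. -/
def HasKCrossing (k : ℕ) (A : Finset (ℕ × ℕ)) : Prop :=
  ∃ f : Fin k → ℕ × ℕ, (∀ i, f i ∈ A) ∧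
    (∀ i j : Fin k, i < j → (f i).1 < (f j).1) ∧
    (∀ i j : Fin k, i < j → (f i).2 < (f j).2) ∧
    (∀ i j : Fin k, (f i).1 < (f j).2)

/-- A `k`-noncrossing diagram over `n` vertices. -/
def IsKNoncrossing (k n : ℕ) (A : Finset (ℕ × ℕ)) : Prop :=
  IsDiagram n A ∧ ¬ HasKCrossing k A

/-- No isolated vertices among `1,…,n`. -/
def IsMatchingOn (n : ℕ) (A : Finset (ℕ × ℕ)) : Prop :=
  ∀ v : ℕ, 1 ≤ v → v ≤ n → ∃ a ∈ A, v = a.1 ∨ v = a.2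

/-- A diagram is modular if every arc has length at least four and every arc
lies in a stack of length at least two (i.e. has a parallel neighbour). -/
def IsModular (A : Finset (ℕ × ℕ)) : Prop :=
  ∀ a ∈ A, a.1 + 4 ≤ a.2 ∧ ((a.1 + 1, a.2 - 1) ∈ A ∨ (a.1 - 1, a.2 + 1) ∈ A)

/-- `Q_k(n)`: the number of modular `k`-noncrossing diagrams over `n` vertices. -/
noncomputable def Qk (k n : ℕ) : ℕ :=
  Nat.card {A : Finset (ℕ × ℕ) // IsKNoncrossing k n A ∧ IsModular A}

/-- `f_k(2n)`: the number of `k`-noncrossing matchings over `2n` vertices. -/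
noncomputable def fk (k n : ℕ) : ℕ :=
  Nat.card {A : Finset (ℕ × ℕ) // IsKNoncrossing k (2 * n) A ∧ IsMatchingOn (2 * n) A}

/-- A `V_k`-shape over `n` vertices: a `k`-noncrossing matching, all of whose
stacks have length exactly one. -/
def IsShape (k n : ℕ) (A : Finset (ℕ × ℕ)) : Prop :=
  IsKNoncrossing k n A ∧ IsMatchingOn n A ∧ ∀ a ∈ A, (a.1 + 1, a.2 - 1) ∉ A

def Is1Arc (a : ℕ × ℕ) : Prop := a.2 = a.1 + 1

def Is2Arc (a : ℕ × ℕ) : Prop := a.2 = a.1 + 2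

/-- Two arcs cross. -/
def Crosses (a b : ℕ × ℕ) : Prop :=
  (a.1 < b.1 ∧ b.1 < a.2 ∧ a.2 < b.2) ∨ (b.1 < a.1 ∧ a.1 < b.2 ∧ b.2 < a.2)

/-- The number of `1`-arcs (class `C₁`). -/
noncomputable def countC1 (A : Finset (ℕ × ℕ)) : ℕ := (A.filter Is1Arc).card

/-- The number of pairs of mutually crossing `2`-arcs (class `C₂`);
each unordered pair is counted once, via its left member. -/
noncomputable def countC2 (A : Finset (ℕ × ℕ)) : ℕ :=
  ((A ×ˢ A).filter (fun p => Is2Arc p.1 ∧ Is2Arc p.2 ∧ p.1.1 < p.2.1 ∧ Crosses p.1 p.2)).card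

/-- The number of `C₃`-elements: pairs `(α,β)` where `β` has length at least
three and `α` is the unique `2`-arc crossing `β`. -/
noncomputable def countC3 (A : Finset (ℕ × ℕ)) : ℕ :=
  (A.filter (fun b => b.1 + 3 ≤ b.2 ∧ ∃! a, a ∈ A ∧ Is2Arc a ∧ Crosses a b)).card

/-- The number of `C₄`-elements: triples `(α₁,β,α₂)` with `α₁ ≠ α₂` two
`2`-arcs both crossing `β`; counted via `β`. -/
noncomputable def countC4 (A : Finset (ℕ × ℕ)) : ℕ :=
  (A.filter (fun b => ∃ a₁ ∈ A, ∃ a₂ ∈ A, a₁ ≠ a₂ ∧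
      Is2Arc a₁ ∧ Is2Arc a₂ ∧ Crosses a₁ b ∧ Crosses a₂ b)).card

/-- `i_k(s,m)`: the number of `V_k`-shapes with `s` arcs, `m` of which are `1`-arcs. -/
noncomputable def ik2 (k s m : ℕ) : ℕ :=
  Nat.card {A : Finset (ℕ × ℕ) // IsShape k (2 * s) A ∧ A.card = s ∧ countC1 A = m}

/-- `i_k(s,u₁,u₂)`: `V_k`-shapes with `s` arcs, `u₁` `1`-arcs, `u₂` pairs of
mutually crossing `2`-arcs. -/
noncomputable def ik3 (k s u₁ u₂ : ℕ) : ℕ :=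
  Nat.card {A : Finset (ℕ × ℕ) //
    IsShape k (2 * s) A ∧ A.card = s ∧ countC1 A = u₁ ∧ countC2 A = u₂}

/-- `i_k(s,u₁,u₂,u₃,u₄)`: `V_k`-shapes with `s` arcs and `u_i` elements of class
`C_i`, `i = 1,2,3,4`.  -/
noncomputable def ik5 (k s u₁ u₂ u₃ u₄ : ℕ) : ℕ :=
  Nat.card {A : Finset (ℕ × ℕ) //
    IsShape k (2 * s) A ∧ A.card = s ∧ countC1 A = u₁ ∧ countC2 A = u₂ ∧
      countC3 A = u₃ ∧ countC4 A = u₄}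

/-- `i_k` with integer arguments, vanishing when some argument is negative. -/
noncomputable def ik5' (k : ℕ) (s u₁ u₂ u₃ u₄ : ℤ) : ℕ :=
  if 0 ≤ s ∧ 0 ≤ u₁ ∧ 0 ≤ u₂ ∧ 0 ≤ u₃ ∧ 0 ≤ u₄ then
    ik5 k s.toNat u₁.toNat u₂.toNat u₃.toNat u₄.toNat
  else 0

/-- `b` is strictly nested in `a`. -/
def Nested (a b : ℕ × ℕ) : Prop := a.1 < b.1 ∧ b.2 < a.2

/-- `b` is the successor of `a` inside a common stem of the diagram `A`:
`b` is nested in `a` and every arc of `A` nested in `a` is contained in or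
nested in (the stack of) `b`. -/
def StemStep (A : Finset (ℕ × ℕ)) (a b : ℕ × ℕ) : Prop :=
  a ∈ A ∧ b ∈ A ∧ Nested a b ∧ ∀ c ∈ A, Nested a c → b.1 ≤ c.1 ∧ c.2 ≤ b.2

/-- The outermost arcs of the stems of `A`. -/
noncomputable def stemTops (A : Finset (ℕ × ℕ)) : Finset (ℕ × ℕ) :=
  A.filter (fun b => ¬ ∃ a ∈ A, StemStep A a b)

/-- The vertices used by a set of arcs. -/
noncomputable def vertexSet (B : Finset (ℕ × ℕ)) : Finset ℕ :=
  B.image Prod.fst ∪ B.image Prod.snd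

/-- The rank (1-based) of `v` within the finite vertex set `V`. -/
noncomputable def rank (V : Finset ℕ) (v : ℕ) : ℕ := (V.filter (· ≤ v)).card

/-- The shape of a diagram: replace every stem by a single arc (its outermost
arc) and delete all isolated vertices, relabelling the remaining vertices in
increasing order. -/
noncomputable def shapeOf (A : Finset (ℕ × ℕ)) : Finset (ℕ × ℕ) :=
  (stemTops A).image
    (fun a => (rank (vertexSet (stemTops A)) a.1, rank (vertexSet (stemTops A)) a.2))

/-- The ordinary generating function `F_k(z) = ∑_{n≥0} f_k(2n) zⁿ`. -/
noncomputable def FkPS (k : ℕ) : PowerSeries ℚ := PowerSeries.mk fun n => (fk k n : ℚ)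

/-- Composition `F_k(g)` for a power series `g` with zero constant term:
the coefficient of `zⁿ` is `∑_{m=0}^{n} f_k(2m) [zⁿ] gᵐ` (higher powers of `g`
do not contribute since `g` has zero constant term). -/
noncomputable def FkComp (k : ℕ) (g : PowerSeries ℚ) : PowerSeries ℚ :=
  PowerSeries.mk fun n =>
    ∑ m ∈ Finset.range (n + 1), (fk k m : ℚ) * PowerSeries.coeff n (g ^ m)

/-- Composition `F_k(g)` for a multivariate power series `g` with zero constant
term: the coefficient of the monomial `d` is `∑_{m=0}^{|d|} f_k(2m) [d] gᵐ`. -/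
noncomputable def FkCompMv {σ : Type} (k : ℕ) (g : MvPowerSeries σ ℚ) :
    MvPowerSeries σ ℚ :=
  fun d => ∑ m ∈ Finset.range (d.sum (fun _ e => e) + 1),
    (fk k m : ℚ) * MvPowerSeries.coeff d (g ^ m)

/-- Formal partial derivative of a multivariate power series. -/
noncomputable def mvDeriv {σ : Type} (i : σ) (f : MvPowerSeries σ ℚ) :
    MvPowerSeries σ ℚ :=
  fun d => ((d i : ℚ) + 1) * MvPowerSeries.coeff (d + Finsupp.single i 1) f

end ModularDiagrams

/-
Let `S(n) = Q₂(n)` and let `W(n)` count the modular diagrams over `n` vertices that contain the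
arc `(1, n)`. Looking at the partner of the last vertex gives `S = 1 + z S + S W`. In a diagram
counted by `W(n)` the arc `(1, n)` sits on `(2, n - 1)`. If `(3, n - 2)` is present too,
deleting `(1, n)` leaves a diagram counted by `W(n - 2)`; otherwise deleting both arcs leaves a
modular diagram on `n - 4` vertices without its outer arc. Hence
`(1 - z² + z⁴) W = z⁴ (S - 1 - z - z²)`, and eliminating `W`,
`P S = (1 - z² + z⁴) + z⁴ S²` with `P = 1 - z - z² + z³ + 2z⁴ + z⁶`.
The same last-vertex decomposition shows that noncrossing matchings are counted by the Catalan
numbers, so `F₂ = 1 + z F₂²`. Substituting `g = z⁴ (1 - z² + z⁴) / P²` shows that the right-hand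
side solves the same quadratic equation. That equation has only one power series solution: the
difference of two solutions `f`, `g` is annihilated by `P - z⁴ (f + g)`, whose constant term is `1`.
-/

namespace ModularDiagrams

open Finset

/-- The possible arcs on the `n` vertices `c + 1, …, c + n`. Diagrams are counted on such
windows, so that cutting a diagram into pieces needs no relabelling. -/
def arcsOn (c n : ℕ) : Finset (ℕ × ℕ) := Icc (c + 1) (c + n) ×ˢ Icc (c + 1) (c + n)

lemma mem_arcsOn {c n : ℕ} {a : ℕ × ℕ} :
    a ∈ arcsOn c n ↔ c + 1 ≤ a.1 ∧ a.1 ≤ c + n ∧ c + 1 ≤ a.2 ∧ a.2 ≤ c + n := by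
  simp [arcsOn, and_assoc]

structure IsNoncrossing (A : Finset (ℕ × ℕ)) : Prop where
  lt : ∀ a ∈ A, a.1 < a.2
  disjoint : ∀ a ∈ A, ∀ b ∈ A, a ≠ b → a.1 ≠ b.1 ∧ a.1 ≠ b.2 ∧ a.2 ≠ b.1 ∧ a.2 ≠ b.2
  noncrossing : ∀ a ∈ A, ∀ b ∈ A, ¬(a.1 < b.1 ∧ b.1 < a.2 ∧ a.2 < b.2)

lemma isNoncrossing_iff {A : Finset (ℕ × ℕ)} : IsNoncrossing A ↔ (∀ a ∈ A, a.1 < a.2) ∧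
    (∀ a ∈ A, ∀ b ∈ A, a ≠ b → a.1 ≠ b.1 ∧ a.1 ≠ b.2 ∧ a.2 ≠ b.1 ∧ a.2 ≠ b.2) ∧
    ∀ a ∈ A, ∀ b ∈ A, ¬(a.1 < b.1 ∧ b.1 < a.2 ∧ a.2 < b.2) :=
  ⟨fun h => ⟨h.1, h.2, h.3⟩, fun h => ⟨h.1, h.2.1, h.2.2⟩⟩

lemma IsNoncrossing.mono {A B : Finset (ℕ × ℕ)} (h : IsNoncrossing A) (hBA : B ⊆ A) :
    IsNoncrossing B :=
  ⟨fun a ha => h.lt a (hBA ha), fun a ha b hb => h.disjoint a (hBA ha) b (hBA hb),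
    fun a ha b hb => h.noncrossing a (hBA ha) b (hBA hb)⟩

lemma hasKCrossing_two_iff {A : Finset (ℕ × ℕ)} :
    HasKCrossing 2 A ↔ ∃ a ∈ A, ∃ b ∈ A, a.1 < b.1 ∧ b.1 < a.2 ∧ a.2 < b.2 := by
  constructor
  · rintro ⟨f, hf, h1, h2, h3⟩
    exact ⟨f 0, hf 0, f 1, hf 1, h1 0 1 (by decide), h3 1 0, h2 0 1 (by decide)⟩
  · rintro ⟨a, ha, b, hb, hab⟩
    refine ⟨![a, b], fun i => ?_, fun i j hij => ?_, fun i j hij => ?_, fun i j => ?_⟩ <;>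
      fin_cases i <;> (try fin_cases j) <;> simp_all <;> omega

lemma isKNoncrossing_two_iff {n : ℕ} {A : Finset (ℕ × ℕ)} :
    IsKNoncrossing 2 n A ↔ A ⊆ arcsOn 0 n ∧ IsNoncrossing A := by
  simp only [IsKNoncrossing, IsDiagram, hasKCrossing_two_iff, not_exists, not_and]
  constructor
  · rintro ⟨⟨hbox, hdisj⟩, hnc⟩
    refine ⟨fun a ha => ?_, fun a ha => (hbox a ha).2.1, hdisj, fun a ha b hb h => ?_⟩
    · have := hbox a ha
      rw [mem_arcsOn]
      omega
    · exact hnc a ha b hb h.1 h.2.1 h.2.2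
  · rintro ⟨hbox, hA⟩
    refine ⟨⟨fun a ha => ?_, hA.disjoint⟩, fun a ha b hb h1 h2 h3 =>
      hA.noncrossing a ha b hb ⟨h1, h2, h3⟩⟩
    have := mem_arcsOn.1 (hbox ha)
    exact ⟨by omega, hA.lt a ha, by omega⟩

def Covers (c n : ℕ) (A : Finset (ℕ × ℕ)) : Prop :=
  ∀ v, c + 1 ≤ v → v ≤ c + n → ∃ a ∈ A, v = a.1 ∨ v = a.2

noncomputable def modularDiagrams (c n : ℕ) : Finset (Finset (ℕ × ℕ)) :=
  (arcsOn c n).powerset.filter fun A => IsNoncrossing A ∧ IsModular A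

noncomputable def rootedModular (c n : ℕ) : Finset (Finset (ℕ × ℕ)) :=
  (modularDiagrams c n).filter ((c + 1, c + n) ∈ ·)

noncomputable def ncMatchings (c n : ℕ) : Finset (Finset (ℕ × ℕ)) :=
  (arcsOn c n).powerset.filter fun A => IsNoncrossing A ∧ Covers c n A

noncomputable def rootedMatchings (c n : ℕ) : Finset (Finset (ℕ × ℕ)) :=
  (ncMatchings c n).filter ((c + 1, c + n) ∈ ·)

lemma natCard_eq_card_filter_powerset {α : Type*} {P : Finset α → Prop} [DecidablePred P]
    {s : Finset α} (h : ∀ A, P A → A ⊆ s) :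
    Nat.card {A // P A} = (s.powerset.filter P).card := by
  rw [← Nat.card_eq_finsetCard]
  exact Nat.card_congr (Equiv.subtypeEquivRight fun A => by
    simpa using fun hP => h A hP)

lemma Qk_two_eq_card (n : ℕ) : Qk 2 n = (modularDiagrams 0 n).card := by
  rw [Qk, natCard_eq_card_filter_powerset (s := arcsOn 0 n)
    (fun A hA => (isKNoncrossing_two_iff.1 hA.1).1), modularDiagrams]
  refine congrArg card (filter_congr fun A hA => ?_)
  rw [isKNoncrossing_two_iff, and_iff_right (mem_powerset.1 hA)]

lemma fk_two_eq_card (n : ℕ) : fk 2 n = (ncMatchings 0 (2 * n)).card := by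
  rw [fk, natCard_eq_card_filter_powerset (s := arcsOn 0 (2 * n))
    (fun A hA => (isKNoncrossing_two_iff.1 hA.1).1), ncMatchings]
  refine congrArg card (filter_congr fun A hA => ?_)
  rw [isKNoncrossing_two_iff, and_iff_right (mem_powerset.1 hA)]
  simp [IsMatchingOn, Covers]

def shiftArc (d : ℕ) : ℕ × ℕ ↪ ℕ × ℕ :=
  ⟨fun a => (a.1 + d, a.2 + d), fun a b h => by
    simp only [Prod.mk.injEq, Nat.add_right_cancel_iff] at h
    exact Prod.ext h.1 h.2⟩

@[simp] lemma shiftArc_apply (d : ℕ) (a : ℕ × ℕ) : shiftArc d a = (a.1 + d, a.2 + d) := rfl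

lemma mem_map_shiftArc {d : ℕ} {A : Finset (ℕ × ℕ)} {p : ℕ × ℕ} :
    p ∈ A.map (shiftArc d) ↔ d ≤ p.1 ∧ d ≤ p.2 ∧ (p.1 - d, p.2 - d) ∈ A := by
  simp only [mem_map, shiftArc_apply]
  constructor
  · rintro ⟨a, ha, rfl⟩
    simpa using ha
  · rintro ⟨h1, h2, h⟩
    exact ⟨_, h, Prod.ext (Nat.sub_add_cancel h1) (Nat.sub_add_cancel h2)⟩

lemma map_shiftArc_arcsOn (c n d : ℕ) : (arcsOn c n).map (shiftArc d) = arcsOn (c + d) n := by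
  ext p
  simp only [mem_map_shiftArc, mem_arcsOn]
  omega

lemma card_filter_powerset_shift {P Q : Finset (ℕ × ℕ) → Prop} [DecidablePred P]
    [DecidablePred Q] {c n d : ℕ} (h : ∀ A ⊆ arcsOn c n, Q (A.map (shiftArc d)) ↔ P A) :
    ((arcsOn (c + d) n).powerset.filter Q).card = ((arcsOn c n).powerset.filter P).card := by
  symm
  refine card_bij (fun A _ => A.map (shiftArc d)) (fun A hA => ?_)
    (fun A _ B _ hAB => map_injective _ hAB) (fun B hB => ?_)
  · simp only [mem_filter, mem_powerset] at hA ⊢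
    exact ⟨map_shiftArc_arcsOn c n d ▸ map_subset_map.2 hA.1, (h A hA.1).2 hA.2⟩
  · simp only [mem_filter, mem_powerset] at hB
    obtain ⟨A, hA, rfl⟩ := subset_map_iff.1 (map_shiftArc_arcsOn c n d ▸ hB.1)
    exact ⟨A, by simpa [hA] using (h A hA).1 hB.2, rfl⟩

lemma isNoncrossing_map_shiftArc {d : ℕ} {A : Finset (ℕ × ℕ)} :
    IsNoncrossing (A.map (shiftArc d)) ↔ IsNoncrossing A := by
  simp only [isNoncrossing_iff, forall_mem_map, shiftArc_apply, ne_eq, Prod.ext_iff,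
    add_lt_add_iff_right, add_left_inj]

lemma isModular_map_shiftArc {d : ℕ} {A : Finset (ℕ × ℕ)} (hA : ∀ a ∈ A, 1 ≤ a.1) :
    IsModular (A.map (shiftArc d)) ↔ IsModular A := by
  rw [IsModular, IsModular, forall_mem_map]
  simp only [shiftArc_apply, mem_map_shiftArc]
  refine forall₂_congr fun a ha => ?_
  have := hA a ha
  constructor
  · rintro ⟨h4, h⟩
    refine ⟨by omega, h.imp (fun h' => ?_) (fun h' => ?_)⟩ <;>
      convert h'.2.2 using 2 <;> omega
  · rintro ⟨h4, h⟩
    refine ⟨by omega, h.imp (fun h' => ⟨by omega, by omega, ?_⟩)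
      (fun h' => ⟨by omega, by omega, ?_⟩)⟩ <;>
      convert h' using 2 <;> omega

lemma covers_map_shiftArc {c n d : ℕ} {A : Finset (ℕ × ℕ)} :
    Covers (c + d) n (A.map (shiftArc d)) ↔ Covers c n A := by
  constructor
  · intro h v h1 h2
    obtain ⟨_, ha, hv⟩ := h (v + d) (by omega) (by omega)
    obtain ⟨a, ha', rfl⟩ := mem_map.1 ha
    exact ⟨a, ha', by simp at hv; omega⟩
  · intro h v h1 h2
    obtain ⟨a, ha, hv⟩ := h (v - d) (by omega) (by omega)
    exact ⟨_, mem_map_of_mem _ ha, by simp; omega⟩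

lemma card_modularDiagrams (c n : ℕ) : (modularDiagrams c n).card = Qk 2 n := by
  rw [Qk_two_eq_card, modularDiagrams, modularDiagrams]
  simpa using card_filter_powerset_shift (c := 0) (d := c) fun A hA =>
    and_congr isNoncrossing_map_shiftArc
      (isModular_map_shiftArc fun a ha => by have := mem_arcsOn.1 (hA ha); omega)

lemma card_rootedModular (c n : ℕ) : (rootedModular c n).card = (rootedModular 0 n).card := by
  simp only [rootedModular, modularDiagrams, filter_filter]
  simpa using card_filter_powerset_shift (c := 0) (d := c) fun A hA =>
    and_congr (and_congr isNoncrossing_map_shiftArc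
      (isModular_map_shiftArc fun a ha => by have := mem_arcsOn.1 (hA ha); omega))
      (by rw [mem_map_shiftArc]; simp)

lemma card_ncMatchings (c n : ℕ) : (ncMatchings c n).card = (ncMatchings 0 n).card := by
  rw [ncMatchings, ncMatchings]
  simpa using card_filter_powerset_shift (c := 0) (d := c)
    (Q := fun A => IsNoncrossing A ∧ Covers (0 + c) n A) fun A _ =>
      and_congr isNoncrossing_map_shiftArc covers_map_shiftArc

section Concatenation

variable {c k j : ℕ} {L R : Finset (ℕ × ℕ)}

lemma lt_of_mem_arcsOn_of_mem_arcsOn {a b : ℕ × ℕ} (ha : a ∈ arcsOn c k)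
    (hb : b ∈ arcsOn (c + k) j) : a.1 < b.1 ∧ a.1 < b.2 ∧ a.2 < b.1 ∧ a.2 < b.2 := by
  rw [mem_arcsOn] at ha hb
  omega

lemma union_subset_arcsOn (hL : L ⊆ arcsOn c k) (hR : R ⊆ arcsOn (c + k) j) :
    L ∪ R ⊆ arcsOn c (k + j) := by
  refine union_subset (fun a ha => ?_) (fun a ha => ?_) <;>
    [have := mem_arcsOn.1 (hL ha); have := mem_arcsOn.1 (hR ha)] <;>
    (rw [mem_arcsOn]; omega)

lemma isNoncrossing_union (hL : L ⊆ arcsOn c k) (hR : R ⊆ arcsOn (c + k) j) :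
    IsNoncrossing (L ∪ R) ↔ IsNoncrossing L ∧ IsNoncrossing R := by
  refine ⟨fun h => ⟨h.mono subset_union_left, h.mono subset_union_right⟩,
    fun ⟨hL', hR'⟩ => ⟨fun a ha => ?_, fun a ha b hb hab => ?_, fun a ha b hb => ?_⟩⟩
  · rcases mem_union.1 ha with ha | ha
    exacts [hL'.lt a ha, hR'.lt a ha]
  · rcases mem_union.1 ha with ha | ha <;> rcases mem_union.1 hb with hb | hb
    · exact hL'.disjoint a ha b hb hab
    · have := lt_of_mem_arcsOn_of_mem_arcsOn (hL ha) (hR hb); omega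
    · have := lt_of_mem_arcsOn_of_mem_arcsOn (hL hb) (hR ha); omega
    · exact hR'.disjoint a ha b hb hab
  · rcases mem_union.1 ha with ha | ha <;> rcases mem_union.1 hb with hb | hb
    · exact hL'.noncrossing a ha b hb
    · have := lt_of_mem_arcsOn_of_mem_arcsOn (hL ha) (hR hb); omega
    · have := lt_of_mem_arcsOn_of_mem_arcsOn (hL hb) (hR ha); omega
    · exact hR'.noncrossing a ha b hb

lemma isModular_union (hL : L ⊆ arcsOn c k) (hR : R ⊆ arcsOn (c + k) j) :
    IsModular (L ∪ R) ↔ IsModular L ∧ IsModular R := by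
  rw [IsModular, forall_mem_union]
  simp only [mem_union]
  refine and_congr (forall₂_congr fun a ha => and_congr_right fun _ => ?_)
    (forall₂_congr fun a ha => and_congr_right fun _ => ?_)
  · have := mem_arcsOn.1 (hL ha)
    have h1 : (a.1 + 1, a.2 - 1) ∉ R := fun h => by have := mem_arcsOn.1 (hR h); omega
    have h2 : (a.1 - 1, a.2 + 1) ∉ R := fun h => by have := mem_arcsOn.1 (hR h); omega
    tauto
  · have := mem_arcsOn.1 (hR ha)
    have h1 : (a.1 + 1, a.2 - 1) ∉ L := fun h => by have := mem_arcsOn.1 (hL h); omega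
    have h2 : (a.1 - 1, a.2 + 1) ∉ L := fun h => by have := mem_arcsOn.1 (hL h); omega
    tauto

lemma covers_union (hL : L ⊆ arcsOn c k) (hR : R ⊆ arcsOn (c + k) j) :
    Covers c (k + j) (L ∪ R) ↔ Covers c k L ∧ Covers (c + k) j R := by
  constructor
  · intro h
    refine ⟨fun v h1 h2 => ?_, fun v h1 h2 => ?_⟩ <;>
      obtain ⟨a, ha, hv⟩ := h v (by omega) (by omega) <;> rcases mem_union.1 ha with ha | ha
    · exact ⟨a, ha, hv⟩
    · have := mem_arcsOn.1 (hR ha); omega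
    · have := mem_arcsOn.1 (hL ha); omega
    · exact ⟨a, ha, hv⟩
  · rintro ⟨hL', hR'⟩ v h1 h2
    obtain ⟨a, ha, hv⟩ | ⟨a, ha, hv⟩ :=
      (le_or_gt v (c + k)).imp (hL' v h1) (fun hv => hR' v hv (by omega))
    exacts [⟨a, mem_union_left _ ha, hv⟩, ⟨a, mem_union_right _ ha, hv⟩]

end Concatenation

lemma snd_lt_or_le_fst_of_mem {A : Finset (ℕ × ℕ)} {x y : ℕ} (hA : IsNoncrossing A)
    (hxy : (x, y) ∈ A) (hy : ∀ a ∈ A, a.2 ≤ y) (a : ℕ × ℕ) (ha : a ∈ A) : a.2 < x ∨ x ≤ a.1 := by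
  by_cases hax : a = (x, y)
  · exact Or.inr (by simp [hax])
  · have := hA.disjoint a ha _ hxy hax
    have := hA.noncrossing a ha _ hxy
    have := hA.lt a ha
    have := hy a ha
    simp only at *
    omega

lemma filter_union_filter_of_mem {A : Finset (ℕ × ℕ)} {c k j : ℕ} (hA : A ⊆ arcsOn c (k + j))
    (hA' : IsNoncrossing A) (hroot : (c + k + 1, c + k + j) ∈ A) :
    A.filter (·.2 ≤ c + k) ∪ A.filter (c + k < ·.1) = A := by
  rw [← filter_or, filter_true_of_mem]
  intro a ha
  have := snd_lt_or_le_fst_of_mem hA' hroot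
    (fun b hb => by have := mem_arcsOn.1 (hA hb); omega) a ha
  omega

lemma card_filter_mem_eq_mul {P PL PR : Finset (ℕ × ℕ) → Prop} [DecidablePred P]
    [DecidablePred PL] [DecidablePred PR] {c k j : ℕ} (hnc : ∀ A, P A → IsNoncrossing A)
    (hP : ∀ L ⊆ arcsOn c k, ∀ R ⊆ arcsOn (c + k) j, P (L ∪ R) ↔ PL L ∧ PR R) :
    (((arcsOn c (k + j)).powerset.filter P).filter ((c + k + 1, c + k + j) ∈ ·)).card =
      ((arcsOn c k).powerset.filter PL).card *
        (((arcsOn (c + k) j).powerset.filter PR).filter ((c + k + 1, c + k + j) ∈ ·)).card := by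
  rw [← card_product]
  symm
  refine card_bij' (fun p _ => p.1 ∪ p.2)
    (fun A _ => (A.filter (·.2 ≤ c + k), A.filter (c + k < ·.1)))
    (fun p hp => ?_) (fun A hA => ?_) (fun p hp => ?_) (fun A hA => ?_)
  · simp only [mem_product, mem_filter, mem_powerset] at hp ⊢
    obtain ⟨⟨hL, hPL⟩, ⟨hR, hPR⟩, hroot⟩ := hp
    exact ⟨⟨union_subset_arcsOn hL hR, (hP _ hL _ hR).2 ⟨hPL, hPR⟩⟩, mem_union_right _ hroot⟩
  · simp only [mem_product, mem_filter, mem_powerset] at hA ⊢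
    obtain ⟨⟨hA, hPA⟩, hroot⟩ := hA
    have hA' := hnc A hPA
    have hL : A.filter (·.2 ≤ c + k) ⊆ arcsOn c k := fun a ha => by
      obtain ⟨ha, hak⟩ := mem_filter.1 ha
      have := mem_arcsOn.1 (hA ha); have := hA'.lt a ha
      rw [mem_arcsOn]; omega
    have hR : A.filter (c + k < ·.1) ⊆ arcsOn (c + k) j := fun a ha => by
      obtain ⟨ha, hak⟩ := mem_filter.1 ha
      have := mem_arcsOn.1 (hA ha); have := hA'.lt a ha
      rw [mem_arcsOn]; omega
    rw [← filter_union_filter_of_mem hA hA' hroot, hP _ hL _ hR] at hPA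
    exact ⟨⟨hL, hPA.1⟩, ⟨hR, hPA.2⟩, ⟨hroot, by omega⟩⟩
  · simp only [mem_product, mem_filter, mem_powerset] at hp
    obtain ⟨⟨hL, -⟩, ⟨hR, -⟩, -⟩ := hp
    have hLk := fun a (ha : a ∈ p.1) => mem_arcsOn.1 (hL ha)
    have hRk := fun a (ha : a ∈ p.2) => mem_arcsOn.1 (hR ha)
    simp only [filter_union]
    rw [filter_true_of_mem (fun a ha => (hLk a ha).2.2.2),
      filter_false_of_mem (fun a ha => by have := hRk a ha; omega),
      filter_false_of_mem (fun a ha => by have := hLk a ha; omega),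
      filter_true_of_mem (fun a ha => by have := hRk a ha; omega), union_empty, empty_union]
  · simp only [mem_filter, mem_powerset] at hA
    exact filter_union_filter_of_mem hA.1.1 (hnc A hA.1.2) hA.2

lemma card_eq_card_filter_add_sum {s : Finset (Finset (ℕ × ℕ))} {c n : ℕ}
    (hs : ∀ A ∈ s, A ⊆ arcsOn c n ∧ IsNoncrossing A) :
    s.card = (s.filter fun A => ∀ a ∈ A, a.2 ≠ c + n).card +
      ∑ p ∈ antidiagonal n, (s.filter ((c + p.1 + 1, c + p.1 + p.2) ∈ ·)).card := by
  rw [← card_filter_add_card_filter_not (fun A => ∀ a ∈ A, a.2 ≠ c + n), ← card_biUnion]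
  · congr 2
    ext A
    simp only [mem_filter, mem_biUnion, HasAntidiagonal.mem_antidiagonal, not_forall, not_not]
    constructor
    · rintro ⟨hA, a, ha, hac⟩
      have := mem_arcsOn.1 ((hs A hA).1 ha)
      refine ⟨(a.1 - c - 1, n - (a.1 - c - 1)), by simp only; omega, hA, ?_⟩
      convert ha using 1
      ext <;> simp only <;> omega
    · rintro ⟨p, hp, hA, harc⟩
      exact ⟨hA, _, harc, by simp only; omega⟩
  · intro p hp q hq hpq
    rw [Function.onFun, disjoint_filter]
    intro A hA hpA hqA
    simp only [mem_coe, HasAntidiagonal.mem_antidiagonal] at hp hq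
    have := (hs A hA).2.disjoint _ hpA _ hqA (by
      intro h; simp only [Prod.mk.injEq] at h; exact hpq (Prod.ext (by omega) (by omega)))
    simp only at this
    omega

section OuterArc

variable {c m : ℕ}

lemma erase_subset_arcsOn {A : Finset (ℕ × ℕ)} (hA : A ⊆ arcsOn c (m + 2))
    (hA' : IsNoncrossing A) (hr : (c + 1, c + (m + 2)) ∈ A) :
    A.erase (c + 1, c + (m + 2)) ⊆ arcsOn (c + 1) m := by
  intro a ha
  obtain ⟨hne, ha⟩ := mem_erase.1 ha
  have := hA'.disjoint a ha _ hr hne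
  have := mem_arcsOn.1 (hA ha)
  simp only at *
  rw [mem_arcsOn]; omega

lemma root_notMem_of_subset {B : Finset (ℕ × ℕ)} (hB : B ⊆ arcsOn (c + 1) m) :
    (c + 1, c + (m + 2)) ∉ B :=
  fun h => by have := mem_arcsOn.1 (hB h); omega

lemma insert_subset_arcsOn {B : Finset (ℕ × ℕ)} (hB : B ⊆ arcsOn (c + 1) m) :
    insert (c + 1, c + (m + 2)) B ⊆ arcsOn c (m + 2) := by
  refine insert_subset (by rw [mem_arcsOn]; omega) fun a ha => ?_
  have := mem_arcsOn.1 (hB ha)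
  rw [mem_arcsOn]; omega

lemma isNoncrossing_insert {B : Finset (ℕ × ℕ)} (hB : B ⊆ arcsOn (c + 1) m)
    (hB' : IsNoncrossing B) : IsNoncrossing (insert (c + 1, c + (m + 2)) B) := by
  have hw := fun a (ha : a ∈ B) => mem_arcsOn.1 (hB ha)
  refine ⟨forall_mem_insert _ _ _ |>.2 ⟨by simp, hB'.lt⟩, fun a ha b hb hab => ?_,
    fun a ha b hb => ?_⟩ <;> rcases mem_insert.1 ha with rfl | ha <;>
    rcases mem_insert.1 hb with rfl | hb
  · exact absurd rfl hab
  · have := hw b hb; simp only; omega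
  · have := hw a ha; simp only; omega
  · exact hB'.disjoint a ha b hb hab
  · simp
  · have := hw b hb; simp only; omega
  · have := hw a ha; simp only; omega
  · exact hB'.noncrossing a ha b hb

lemma covers_insert {B : Finset (ℕ × ℕ)} :
    Covers c (m + 2) (insert (c + 1, c + (m + 2)) B) ↔ Covers (c + 1) m B := by
  simp only [Covers, exists_mem_insert]
  constructor
  · intro h v h1 h2
    exact (h v (by omega) (by omega)).resolve_left (by omega)
  · intro h v h1 h2
    by_cases hv : v = c + 1 ∨ v = c + (m + 2)
    · exact Or.inl hv
    · exact Or.inr (h v (by omega) (by omega))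

end OuterArc

lemma inner_mem_of_root_mem {A : Finset (ℕ × ℕ)} {c n : ℕ} (hA : A ⊆ arcsOn c n)
    (hmod : IsModular A) (hr : (c + 1, c + n) ∈ A) : (c + 1 + 1, c + n - 1) ∈ A :=
  (hmod _ hr).2.resolve_right fun h => by have := mem_arcsOn.1 (hA h); simp only at this; omega

lemma modularDiagrams_eq_singleton {c n : ℕ} (hn : n ≤ 4) : modularDiagrams c n = {∅} := by
  ext A
  simp only [modularDiagrams, mem_filter, mem_powerset, mem_singleton]
  constructor
  · rintro ⟨hA, -, hmod⟩
    refine eq_empty_of_forall_notMem fun a ha => ?_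
    have := mem_arcsOn.1 (hA ha); have := (hmod a ha).1
    omega
  · rintro rfl
    exact ⟨empty_subset _, ⟨by simp, by simp, by simp⟩, by simp [IsModular]⟩

lemma Qk_two_of_le_four {n : ℕ} (hn : n ≤ 4) : Qk 2 n = 1 := by
  rw [Qk_two_eq_card, modularDiagrams_eq_singleton hn, card_singleton]

lemma rootedModular_eq_empty {c n : ℕ} (hn : n ≤ 6) : rootedModular c n = ∅ := by
  refine eq_empty_of_forall_notMem fun A hA => ?_
  simp only [rootedModular, modularDiagrams, mem_filter, mem_powerset] at hA
  obtain ⟨⟨hA, -, hmod⟩, hr⟩ := hA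
  have := (hmod _ (inner_mem_of_root_mem hA hmod hr)).1
  simp only at this
  omega

section RootStack

variable {c m : ℕ} {A : Finset (ℕ × ℕ)}

lemma isModular_erase_of_mem (hA : A ⊆ arcsOn c (m + 4)) (hmod : IsModular A)
    (ht : (c + 3, c + m + 2) ∈ A) : IsModular (A.erase (c + 1, c + (m + 4))) := by
  intro a ha
  obtain ⟨hne, ha⟩ := mem_erase.1 ha
  have := mem_arcsOn.1 (hA ha)
  obtain ⟨hlen, hnb⟩ := hmod a ha
  refine ⟨hlen, ?_⟩
  by_cases has : a = (c + 1 + 1, c + (m + 4) - 1)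
  · subst has
    exact Or.inl (mem_erase.2 ⟨by simp, by convert ht using 2; omega⟩)
  · refine hnb.imp (fun h => mem_erase.2 ⟨?_, h⟩) (fun h => mem_erase.2 ⟨?_, h⟩) <;>
      intro h <;> simp only [Prod.mk.injEq] at h
    · omega
    · exact has (Prod.ext (by simp only; omega) (by simp only; omega))

lemma isModular_erase_erase_of_notMem (hA : A ⊆ arcsOn c (m + 4)) (hmod : IsModular A)
    (ht : (c + 3, c + m + 2) ∉ A) :
    IsModular ((A.erase (c + 1, c + (m + 4))).erase (c + 1 + 1, c + 1 + (m + 2))) := by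
  intro a ha
  obtain ⟨hne₂, hne₁, ha⟩ : _ ∧ _ ∧ a ∈ A := by simpa only [mem_erase] using ha
  have := mem_arcsOn.1 (hA ha)
  obtain ⟨hlen, hnb⟩ := hmod a ha
  refine ⟨hlen, hnb.imp (fun h => ?_) (fun h => ?_)⟩ <;>
    refine mem_erase.2 ⟨fun he => ?_, mem_erase.2 ⟨fun he => ?_, h⟩⟩ <;>
    simp only [Prod.mk.injEq] at he
  · exact hne₁ (Prod.ext (by simp only; omega) (by simp only; omega))
  · omega
  · exact ht (by convert ha using 2 <;> omega)
  · exact hne₂ (Prod.ext (by simp only; omega) (by simp only; omega))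

lemma card_filter_mem_rootedModular (c m : ℕ) :
    ((rootedModular c (m + 4)).filter ((c + 3, c + m + 2) ∈ ·)).card =
      (rootedModular (c + 1) (m + 2)).card := by
  refine card_bij' (fun A _ => A.erase (c + 1, c + (m + 4)))
    (fun B _ => insert (c + 1, c + (m + 4)) B) (fun A hA => ?_) (fun B hB => ?_)
    (fun A hA => insert_erase (mem_filter.1 (mem_filter.1 hA).1).2) (fun B hB => ?_)
  · simp only [rootedModular, modularDiagrams, mem_filter, mem_powerset] at hA ⊢
    obtain ⟨⟨⟨hA, hnc, hmod⟩, hr⟩, ht⟩ := hA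
    exact ⟨⟨erase_subset_arcsOn hA hnc hr, hnc.mono (erase_subset _ _),
      isModular_erase_of_mem hA hmod ht⟩,
      mem_erase.2 ⟨by simp, by convert inner_mem_of_root_mem hA hmod hr using 2; omega⟩⟩
  · simp only [rootedModular, modularDiagrams, mem_filter, mem_powerset] at hB ⊢
    obtain ⟨⟨hB, hnc, hmod⟩, hr⟩ := hB
    have hlen := (hmod _ hr).1
    simp only at hlen
    refine ⟨⟨⟨insert_subset_arcsOn hB, isNoncrossing_insert hB hnc, ?_⟩, mem_insert_self _ _⟩,
      mem_insert_of_mem (by convert inner_mem_of_root_mem hB hmod hr using 2; omega)⟩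
    refine (forall_mem_insert _ _ _).2 ⟨⟨by simp only; omega, ?_⟩, fun a ha => ?_⟩
    · exact Or.inl (mem_insert_of_mem (by convert hr using 2; omega))
    · obtain ⟨hlen, hnb⟩ := hmod a ha
      exact ⟨hlen, hnb.imp mem_insert_of_mem mem_insert_of_mem⟩
  · simp only [rootedModular, modularDiagrams, mem_filter, mem_powerset] at hB
    exact erase_insert (root_notMem_of_subset hB.1.1)

lemma card_filter_notMem_rootedModular (hm : 3 ≤ m) :
    ((rootedModular c (m + 4)).filter ((c + 3, c + m + 2) ∉ ·)).card =
      ((modularDiagrams (c + 2) m).filter ((c + 2 + 1, c + 2 + m) ∉ ·)).card := by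
  refine card_bij' (fun A _ => (A.erase (c + 1, c + (m + 4))).erase (c + 1 + 1, c + 1 + (m + 2)))
    (fun B _ => insert (c + 1, c + (m + 4)) (insert (c + 1 + 1, c + 1 + (m + 2)) B))
    (fun A hA => ?_) (fun B hB => ?_) (fun A hA => ?_) (fun B hB => ?_)
  · simp only [rootedModular, modularDiagrams, mem_filter, mem_powerset] at hA ⊢
    obtain ⟨⟨⟨hA, hnc, hmod⟩, hr⟩, ht⟩ := hA
    have hs : (c + 1 + 1, c + 1 + (m + 2)) ∈ A.erase (c + 1, c + (m + 4)) :=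
      mem_erase.2 ⟨by simp, by convert inner_mem_of_root_mem hA hmod hr using 2; omega⟩
    exact ⟨⟨erase_subset_arcsOn (erase_subset_arcsOn hA hnc hr) (hnc.mono (erase_subset _ _)) hs,
      hnc.mono ((erase_subset _ _).trans (erase_subset _ _)),
      isModular_erase_erase_of_notMem hA hmod ht⟩,
      fun h => ht (by convert mem_of_mem_erase (mem_of_mem_erase h) using 2; omega)⟩
  · simp only [rootedModular, modularDiagrams, mem_filter, mem_powerset] at hB ⊢
    obtain ⟨⟨hB, hnc, hmod⟩, ht⟩ := hB
    have hB₁ := insert_subset_arcsOn hB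
    refine ⟨⟨⟨insert_subset_arcsOn hB₁, isNoncrossing_insert hB₁ (isNoncrossing_insert hB hnc),
      ?_⟩, mem_insert_self _ _⟩, ?_⟩
    · refine (forall_mem_insert _ _ _).2 ⟨⟨by simp only; omega, Or.inl ?_⟩,
        (forall_mem_insert _ _ _).2 ⟨⟨by simp only; omega, Or.inr ?_⟩, fun a ha => ?_⟩⟩
      · exact mem_insert_of_mem (by convert mem_insert_self _ B using 2; omega)
      · convert mem_insert_self _ _ using 2 <;> omega
      · obtain ⟨hlen, hnb⟩ := hmod a ha
        exact ⟨hlen, hnb.imp (fun h => mem_insert_of_mem (mem_insert_of_mem h))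
          (fun h => mem_insert_of_mem (mem_insert_of_mem h))⟩
    · simp only [mem_insert, Prod.mk.injEq, not_or]
      exact ⟨by omega, by omega, fun h => ht (by convert h using 2; omega)⟩
  · simp only [rootedModular, modularDiagrams, mem_filter, mem_powerset] at hA
    obtain ⟨⟨⟨hA, -, hmod⟩, hr⟩, -⟩ := hA
    rw [insert_erase (mem_erase.2 ⟨by simp, by
      convert inner_mem_of_root_mem hA hmod hr using 2; omega⟩), insert_erase hr]
  · simp only [mem_filter, modularDiagrams, mem_powerset] at hB
    rw [erase_insert (root_notMem_of_subset (insert_subset_arcsOn hB.1.1)),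
      erase_insert (root_notMem_of_subset hB.1.1)]

end RootStack

lemma card_rootedModular_add_four {m : ℕ} (hm : 3 ≤ m) :
    (rootedModular 0 (m + 4)).card + (rootedModular 0 m).card =
      (rootedModular 0 (m + 2)).card + Qk 2 m := by
  have h₁ := card_filter_add_card_filter_not (s := rootedModular 0 (m + 4))
    (p := ((0 + 3, 0 + m + 2) ∈ ·))
  have h₂ := card_filter_add_card_filter_not (s := modularDiagrams (0 + 2) m)
    (p := ((0 + 2 + 1, 0 + 2 + m) ∈ ·))
  rw [card_filter_mem_rootedModular, card_filter_notMem_rootedModular hm,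
    card_rootedModular] at h₁
  rw [card_modularDiagrams] at h₂
  have h₃ := card_rootedModular (0 + 2) m
  rw [rootedModular] at h₃
  omega

lemma filter_modularDiagrams_succ (c n : ℕ) :
    (modularDiagrams c (n + 1)).filter (fun A => ∀ a ∈ A, a.2 ≠ c + (n + 1)) =
      modularDiagrams c n := by
  ext A
  simp only [modularDiagrams, mem_filter, mem_powerset]
  constructor
  · rintro ⟨⟨hA, hnc, hmod⟩, hlast⟩
    refine ⟨fun a ha => ?_, hnc, hmod⟩
    have := mem_arcsOn.1 (hA ha); have := hlast a ha; have := hnc.lt a ha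
    rw [mem_arcsOn]; omega
  · rintro ⟨hA, hA'⟩
    have hw := fun a (ha : a ∈ A) => mem_arcsOn.1 (hA ha)
    exact ⟨⟨fun a ha => by have := hw a ha; rw [mem_arcsOn]; omega, hA'⟩,
      fun a ha => by have := hw a ha; omega⟩

lemma Qk_two_succ (n : ℕ) :
    Qk 2 (n + 1) =
      Qk 2 n + ∑ p ∈ antidiagonal (n + 1), Qk 2 p.1 * (rootedModular 0 p.2).card := by
  rw [Qk_two_eq_card, card_eq_card_filter_add_sum (c := 0) fun A hA => by
      simp only [modularDiagrams, mem_filter, mem_powerset] at hA; exact ⟨hA.1, hA.2.1⟩,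
    filter_modularDiagrams_succ, ← Qk_two_eq_card]
  refine congrArg _ (sum_congr rfl fun p hp => ?_)
  obtain ⟨k, j⟩ := p
  rw [HasAntidiagonal.mem_antidiagonal] at hp
  rw [← hp, modularDiagrams, card_filter_mem_eq_mul (fun A hA => hA.1) fun L hL R hR => by
    rw [isNoncrossing_union hL hR, isModular_union hL hR, and_and_and_comm]]
  exact congrArg₂ _ (card_modularDiagrams 0 k) (card_rootedModular (0 + k) j)

lemma ncMatchings_zero (c : ℕ) : ncMatchings c 0 = {∅} := by
  have : arcsOn c 0 = ∅ := by ext a; simp only [mem_arcsOn, notMem_empty, iff_false]; omega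
  rw [ncMatchings, this, powerset_empty, filter_singleton, if_pos]
  exact ⟨⟨by simp, by simp, by simp⟩, fun v h1 h2 => by omega⟩

lemma rootedMatchings_eq_empty {c n : ℕ} (hn : n ≤ 1) : rootedMatchings c n = ∅ := by
  refine eq_empty_of_forall_notMem fun A hA => ?_
  simp only [rootedMatchings, ncMatchings, mem_filter] at hA
  have := hA.1.2.1.lt _ hA.2
  simp only at this
  omega

lemma card_rootedMatchings_add_two (c m : ℕ) :
    (rootedMatchings c (m + 2)).card = (ncMatchings 0 m).card := by
  rw [← card_ncMatchings (c + 1) m]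
  refine card_bij' (fun A _ => A.erase (c + 1, c + (m + 2)))
    (fun B _ => insert (c + 1, c + (m + 2)) B) (fun A hA => ?_) (fun B hB => ?_)
    (fun A hA => insert_erase (mem_filter.1 hA).2) (fun B hB => ?_)
  · simp only [rootedMatchings, ncMatchings, mem_filter, mem_powerset] at hA ⊢
    obtain ⟨⟨hA, hnc, hcov⟩, hr⟩ := hA
    rw [← insert_erase hr, covers_insert] at hcov
    exact ⟨erase_subset_arcsOn hA hnc hr, hnc.mono (erase_subset _ _), hcov⟩
  · simp only [rootedMatchings, ncMatchings, mem_filter, mem_powerset] at hB ⊢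
    exact ⟨⟨insert_subset_arcsOn hB.1, isNoncrossing_insert hB.1 hB.2.1,
      covers_insert.2 hB.2.2⟩, mem_insert_self _ _⟩
  · simp only [ncMatchings, mem_filter, mem_powerset] at hB
    exact erase_insert (root_notMem_of_subset hB.1)

lemma card_rootedMatchings (c n : ℕ) :
    (rootedMatchings c n).card = (rootedMatchings 0 n).card := by
  obtain hn | ⟨m, rfl⟩ : n ≤ 1 ∨ ∃ m, n = m + 2 :=
    (le_or_gt n 1).imp_right fun hn => ⟨n - 2, by omega⟩
  · rw [rootedMatchings_eq_empty hn, rootedMatchings_eq_empty hn]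
  · rw [card_rootedMatchings_add_two, card_rootedMatchings_add_two]

lemma filter_ncMatchings_succ (c n : ℕ) :
    (ncMatchings c (n + 1)).filter (fun A => ∀ a ∈ A, a.2 ≠ c + (n + 1)) = ∅ := by
  refine eq_empty_of_forall_notMem fun A hA => ?_
  simp only [ncMatchings, mem_filter, mem_powerset] at hA
  obtain ⟨⟨hA, hnc, hcov⟩, hlast⟩ := hA
  obtain ⟨a, ha, hv⟩ := hcov (c + (n + 1)) (by omega) le_rfl
  have := mem_arcsOn.1 (hA ha); have := hnc.lt a ha; have := hlast a ha
  omega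

lemma card_ncMatchings_succ (n : ℕ) :
    (ncMatchings 0 (n + 1)).card =
      ∑ p ∈ antidiagonal (n + 1), (ncMatchings 0 p.1).card * (rootedMatchings 0 p.2).card := by
  rw [card_eq_card_filter_add_sum (c := 0) fun A hA => by
      simp only [ncMatchings, mem_filter, mem_powerset] at hA; exact ⟨hA.1, hA.2.1⟩,
    filter_ncMatchings_succ, card_empty, zero_add]
  refine sum_congr rfl fun p hp => ?_
  obtain ⟨k, j⟩ := p
  rw [HasAntidiagonal.mem_antidiagonal] at hp
  rw [← hp, ncMatchings, card_filter_mem_eq_mul (fun A hA => hA.1) fun L hL R hR => by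
    rw [isNoncrossing_union hL hR, covers_union hL hR, and_and_and_comm]]
  exact congrArg₂ _ (card_ncMatchings 0 k) (card_rootedMatchings (0 + k) j)

open PowerSeries

lemma eq_of_mul_eq_add_mul_sq {R : Type*} [CommRing R] [IsDomain R] {p q r f g : R⟦X⟧}
    (hp : constantCoeff p ≠ 0) (hr : constantCoeff r = 0)
    (hf : p * f = q + r * f ^ 2) (hg : p * g = q + r * g ^ 2) : f = g := by
  have hne : p - r * (f + g) ≠ 0 := fun h => hp (by simpa [hr] using congrArg constantCoeff h)
  refine sub_eq_zero.1 ((mul_eq_zero.1 ?_).resolve_left hne)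
  linear_combination hf - hg

lemma coeff_pow_eq_zero_of_lt {R : Type*} [CommRing R] {g : R⟦X⟧} (hg : constantCoeff g = 0)
    {n m : ℕ} (h : n < m) : coeff n (g ^ m) = 0 :=
  X_pow_dvd_iff.1 (pow_dvd_pow_of_dvd (X_dvd_iff.2 hg) m) n h

lemma FkComp_eq_subst (k : ℕ) {g : ℚ⟦X⟧} (hg : constantCoeff g = 0) :
    FkComp k g = (FkPS k).subst g := by
  ext n
  rw [coeff_subst' (HasSubst.of_constantCoeff_zero' hg),
    finsum_eq_sum_of_support_subset (s := range (n + 1))]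
  · simp [FkComp, FkPS]
  · intro d hd
    by_contra h
    simp only [mem_coe, mem_range, not_lt] at h
    exact hd (by simp [coeff_pow_eq_zero_of_lt hg (by omega : n < d)])

noncomputable def matchingSeries : ℚ⟦X⟧ := PowerSeries.mk fun n => ((ncMatchings 0 n).card : ℚ)

lemma matchingSeries_eq_one_add : matchingSeries = 1 + X ^ 2 * matchingSeries ^ 2 := by
  have hroot (j : ℕ) : coeff j (X ^ 2 * matchingSeries) = ((rootedMatchings 0 j).card : ℚ) := by
    rcases le_or_gt j 1 with hj | hj
    · rw [coeff_X_pow_mul', if_neg (by omega), rootedMatchings_eq_empty hj, card_empty,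
        Nat.cast_zero]
    · obtain ⟨m, rfl⟩ : ∃ m, j = m + 2 := ⟨j - 2, by omega⟩
      rw [coeff_X_pow_mul, card_rootedMatchings_add_two, matchingSeries, coeff_mk]
  rw [show X ^ 2 * matchingSeries ^ 2 = matchingSeries * (X ^ 2 * matchingSeries) by ring]
  ext n
  rcases n with _ | n
  · simp [matchingSeries, ncMatchings_zero]
  · rw [map_add, coeff_one, if_neg n.succ_ne_zero, zero_add, coeff_mul]
    simp only [hroot]
    simp only [matchingSeries, coeff_mk]
    exact_mod_cast card_ncMatchings_succ n

lemma map_catalanSeries_eq_one_add :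
    catalanSeries.map (Nat.castRingHom ℚ) =
      1 + X * (catalanSeries.map (Nat.castRingHom ℚ)) ^ 2 := by
  have := congrArg (map (Nat.castRingHom ℚ)) catalanSeries_sq_mul_X_add_one
  simp only [map_add, map_mul, map_pow, map_X, map_one] at this
  linear_combination -this

lemma card_ncMatchings_two_mul (n : ℕ) : (ncMatchings 0 (2 * n)).card = catalan n := by
  have hX2 : HasSubst (X ^ 2 : ℚ⟦X⟧) := HasSubst.X_pow two_ne_zero
  have hC := congrArg (substAlgHom hX2) map_catalanSeries_eq_one_add
  simp only [map_add, map_one, map_mul, map_pow, coe_substAlgHom, subst_X hX2] at hC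
  have h : matchingSeries = (catalanSeries.map (Nat.castRingHom ℚ)).subst (X ^ 2 : ℚ⟦X⟧) :=
    eq_of_mul_eq_add_mul_sq (p := 1) (r := X ^ 2) (by simp) (by simp)
      (by rw [one_mul]; exact matchingSeries_eq_one_add) (by rw [one_mul]; exact hC)
  have := congrArg (coeff (2 * n)) h
  rw [matchingSeries, coeff_mk, coeff_subst_X_pow two_ne_zero] at this
  simpa using this

lemma fk_two_eq_catalan (n : ℕ) : fk 2 n = catalan n :=
  (fk_two_eq_card n).trans (card_ncMatchings_two_mul n)

lemma FkComp_two_eq_one_add {g : ℚ⟦X⟧} (hg : constantCoeff g = 0) :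
    FkComp 2 g = 1 + g * FkComp 2 g ^ 2 := by
  have hFk : FkPS 2 = catalanSeries.map (Nat.castRingHom ℚ) := by
    ext n; simp [FkPS, fk_two_eq_catalan]
  have hg' := HasSubst.of_constantCoeff_zero' hg
  have := congrArg (substAlgHom hg') map_catalanSeries_eq_one_add
  simp only [map_add, map_one, map_mul, map_pow, coe_substAlgHom, subst_X hg'] at this
  rwa [FkComp_eq_subst 2 hg, hFk]

noncomputable def modularSeries : ℚ⟦X⟧ := PowerSeries.mk fun n => (Qk 2 n : ℚ)

noncomputable def rootedSeries : ℚ⟦X⟧ :=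
  PowerSeries.mk fun n => ((rootedModular 0 n).card : ℚ)

lemma modularSeries_eq_one_add :
    modularSeries = 1 + X * modularSeries + modularSeries * rootedSeries := by
  ext n
  rcases n with _ | n
  · simp [modularSeries, rootedSeries, Qk_two_of_le_four, rootedModular_eq_empty]
  · rw [map_add, map_add, coeff_one, if_neg n.succ_ne_zero, zero_add, coeff_succ_X_mul,
      coeff_mul]
    simp only [modularSeries, rootedSeries, coeff_mk]
    exact_mod_cast Qk_two_succ n

lemma mul_rootedSeries_eq :
    (1 - X ^ 2 + X ^ 4) * rootedSeries = X ^ 4 * (modularSeries - 1 - X - X ^ 2) := by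
  suffices h : rootedSeries + X ^ 4 * rootedSeries + X ^ 4 * (1 + X + X ^ 2) =
      X ^ 2 * rootedSeries + X ^ 4 * modularSeries by linear_combination h
  ext n
  obtain hn | ⟨m, rfl⟩ : n < 4 ∨ ∃ m, n = m + 4 :=
    (lt_or_ge n 4).imp_right fun hn => ⟨n - 4, by omega⟩
  · interval_cases n <;> simp [rootedSeries, coeff_X_pow_mul', rootedModular_eq_empty]
  · simp only [map_add, coeff_X_pow_mul', rootedSeries, modularSeries, coeff_mk,
      le_add_iff_nonneg_left, zero_le, if_true, Nat.add_sub_cancel,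
      show m + 4 - 2 = m + 2 by omega]
    rcases le_or_gt m 2 with hm | hm
    · interval_cases m <;> simp [rootedModular_eq_empty, Qk_two_of_le_four, coeff_X]
    · simp only [coeff_one, coeff_X, coeff_X_pow, if_neg (show m ≠ 0 by omega),
        if_neg (show m ≠ 1 by omega), if_neg (show m ≠ 2 by omega), add_zero]
      exact_mod_cast card_rootedModular_add_four hm

lemma modularSeries_quadratic :
    (1 - X - X ^ 2 + X ^ 3 + 2 * X ^ 4 + X ^ 6) * modularSeries =
      (1 - X ^ 2 + X ^ 4) + X ^ 4 * modularSeries ^ 2 := by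
  linear_combination (1 - X ^ 2 + X ^ 4) * modularSeries_eq_one_add +
    modularSeries * mul_rootedSeries_eq

/-- The generating function of modular noncrossing diagrams:
`∑ₙ Q₂(n) zⁿ = ((1 - z² + z⁴)/(1 - z - z² + z³ + 2z⁴ + z⁶)) ·
F₂((z⁴ - z⁶ + z⁸)/(1 - z - z² + z³ + 2z⁴ + z⁶)²)`. -/
theorem modular_gf_two :
    (PowerSeries.mk fun n => (Qk 2 n : ℚ)) =
      (1 - X ^ 2 + X ^ 4) *
        (1 - X - X ^ 2 + X ^ 3 + 2 * X ^ 4 + X ^ 6 : PowerSeries ℚ)⁻¹ *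
        FkComp 2
          ((X ^ 4 - X ^ 6 + X ^ 8) *
            ((1 - X - X ^ 2 + X ^ 3 + 2 * X ^ 4 + X ^ 6 : PowerSeries ℚ)⁻¹) ^ 2) := by
  have hP : constantCoeff (1 - X - X ^ 2 + X ^ 3 + 2 * X ^ 4 + X ^ 6 : ℚ⟦X⟧) ≠ 0 := by simp
  have hD := FkComp_two_eq_one_add (g := (X ^ 4 - X ^ 6 + X ^ 8) *
    ((1 - X - X ^ 2 + X ^ 3 + 2 * X ^ 4 + X ^ 6 : ℚ⟦X⟧)⁻¹) ^ 2) (by simp)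
  refine eq_of_mul_eq_add_mul_sq hP (r := X ^ 4) (by simp) modularSeries_quadratic ?_
  linear_combination (1 - X ^ 2 + X ^ 4) * FkComp 2 _ * PowerSeries.mul_inv_cancel _ hP +
    (1 - X ^ 2 + X ^ 4) * hD

end ModularDiagrams
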